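/- For every α ∈ (0,1/2) there is a unique λ_α ∈ (0,1) with λ_α·F_α'(λ_α) = F_α(λ_α), and as α ↑ 1/2 the following limits hold: (1 − λ_α)/(1/2 − α)² → 16/9 (i.e. λ_α = 1 − (16/9)(1/2 − α)² + o((1/2 − α)²)); F_α(λ_α) → 1; and (1/2 − α)·F_α''(λ_α) → 3√3/16, where F_α''(z) = 3/(4(2α − 1 + √3)·√(1−z)). -/

import Mathlib

open Real Filter Set

/-!
Put `s = √(1 - λ)`. Then `λ F_α'(λ) = F_α(λ)` becomes the cubic equation
`s (3 - s²) = 2 (1 - 2α)`, whose left side increases strictly from `0` to `2` on `[0, 1]`;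
this gives existence and uniqueness of `λ_α ∈ (0, 1)`. Writing `ε = 1/2 - α`, the cubic forces
`s ≤ 2ε → 0` and then `ε / s = (3 - s²)/4 → 3/4`, and all three limits are read off from
`1 - λ_α = s²`, `F_α(1 - s²) = (2α - 1 + √3 (1 - s²) + s³)/(2α - 1 + √3)` and
`F_α''(1 - s²) = 3 / (4 (2α - 1 + √3) s)`.
-/

/-- The generating function `F_α(z) = (2α - 1 + √3 z + (1-z)^{3/2})/(2α - 1 + √3)`. -/
noncomputable def Falpha (α : ℝ) (z : ℝ) : ℝ :=
  (2 * α - 1 + Real.sqrt 3 * z + (1 - z) ^ ((3 : ℝ) / 2))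
    / (2 * α - 1 + Real.sqrt 3)

open Topology

lemma Falpha_denom_pos {α : ℝ} (hα : 0 ≤ α) : 0 < 2 * α - 1 + √3 := by
  have : (1 : ℝ) < √3 := by
    rw [Real.lt_sqrt zero_le_one]
    norm_num
  linarith

lemma hasDerivAt_Falpha (α z : ℝ) :
    HasDerivAt (Falpha α) ((√3 - 3 / 2 * √(1 - z)) / (2 * α - 1 + √3)) z := by
  have hpow : HasDerivAt (fun x : ℝ => (1 - x) ^ ((3 : ℝ) / 2)) (3 / 2 * √(1 - z) * -1) z := by
    refine ((Real.hasDerivAt_rpow_const (x := 1 - z) (p := 3 / 2) (Or.inr (by norm_num))).comp z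
      ((hasDerivAt_id z).const_sub 1)).congr_deriv ?_
    rw [Real.sqrt_eq_rpow]
    norm_num
  exact (((((hasDerivAt_id z).const_mul √3).const_add (2 * α - 1)).add hpow).div_const
    (2 * α - 1 + √3)).congr_deriv (by ring_nf)

lemma deriv_Falpha (α : ℝ) :
    deriv (Falpha α) = fun z => (√3 - 3 / 2 * √(1 - z)) / (2 * α - 1 + √3) :=
  funext fun z => (hasDerivAt_Falpha α z).deriv

lemma deriv_deriv_Falpha (α : ℝ) {z : ℝ} (hz : z < 1) :
    deriv (deriv (Falpha α)) z = 3 / (4 * (2 * α - 1 + √3) * √(1 - z)) := by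
  have hsqrt : HasDerivAt (fun x : ℝ => √(1 - x)) (1 / (2 * √(1 - z)) * -1) z :=
    (Real.hasDerivAt_sqrt (by linarith)).comp z ((hasDerivAt_id z).const_sub 1)
  have h : HasDerivAt (fun x => (√3 - 3 / 2 * √(1 - x)) / (2 * α - 1 + √3))
      ((0 - 3 / 2 * (1 / (2 * √(1 - z)) * -1)) / (2 * α - 1 + √3)) z :=
    ((hasDerivAt_const z √3).sub (hsqrt.const_mul (3 / 2))).div_const _
  rw [deriv_Falpha, h.deriv]
  simp only [div_eq_mul_inv, mul_inv]
  ring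

lemma Falpha_one_sub_sq (α : ℝ) {s : ℝ} (hs : 0 ≤ s) :
    Falpha α (1 - s ^ 2) = (2 * α - 1 + √3 * (1 - s ^ 2) + s ^ 3) / (2 * α - 1 + √3) := by
  rw [Falpha, sub_sub_cancel, ← Real.rpow_natCast s 2, ← Real.rpow_mul hs]
  norm_num

lemma continuousAt_Falpha {α : ℝ} (hα : 2 * α - 1 + √3 ≠ 0) (z : ℝ) :
    ContinuousAt (fun p : ℝ × ℝ => Falpha p.1 p.2) (α, z) := by
  have hpow : ContinuousAt (fun p : ℝ × ℝ => (1 - p.2) ^ ((3 : ℝ) / 2)) (α, z) :=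
    (Real.continuousAt_rpow_const _ _ (Or.inr (by norm_num))).comp (by fun_prop)
  exact ((by fun_prop : ContinuousAt (fun p : ℝ × ℝ => 2 * p.1 - 1 + √3 * p.2) (α, z)).add
    hpow).div (by fun_prop) hα

lemma Falpha_half_one : Falpha (1 / 2) 1 = 1 := by
  norm_num [Falpha]

lemma fixedPoint_one_sub_sq_iff {α s : ℝ} (hα : 2 * α - 1 + √3 ≠ 0) (hs : 0 ≤ s) :
    (1 - s ^ 2) * deriv (Falpha α) (1 - s ^ 2) = Falpha α (1 - s ^ 2)
      ↔ s * (3 - s ^ 2) = 2 * (1 - 2 * α) := by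
  rw [deriv_Falpha, Falpha_one_sub_sq α hs]
  beta_reduce
  rw [sub_sub_cancel, Real.sqrt_sq hs, ← mul_div_assoc, div_left_inj' hα]
  constructor
  · intro h
    linear_combination (-2 : ℝ) * h
  · intro h
    linear_combination (-1 / 2 : ℝ) * h

lemma one_sub_sq_sqrt_one_sub {l : ℝ} (hl : l ≤ 1) : 1 - √(1 - l) ^ 2 = l := by
  rw [Real.sq_sqrt (by linarith)]
  ring

lemma sqrt_one_sub_mem_Ioo {l : ℝ} (hl : l ∈ Ioo 0 1) : √(1 - l) ∈ Ioo 0 1 :=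
  ⟨Real.sqrt_pos.2 (by linarith [hl.2]),
    by rw [Real.sqrt_lt' one_pos]; linarith [hl.1]⟩

lemma fixedPoint_iff_cubic {α l : ℝ} (hα : 2 * α - 1 + √3 ≠ 0) (hl : l ≤ 1) :
    l * deriv (Falpha α) l = Falpha α l ↔ √(1 - l) * (3 - √(1 - l) ^ 2) = 2 * (1 - 2 * α) := by
  have := fixedPoint_one_sub_sq_iff hα (Real.sqrt_nonneg (1 - l))
  rwa [one_sub_sq_sqrt_one_sub hl] at this

lemma strictMonoOn_cubic : StrictMonoOn (fun s : ℝ => s * (3 - s ^ 2)) (Icc 0 1) := by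
  intro a ha b hb hab
  have hfactor : 0 < 3 - (a ^ 2 + a * b + b ^ 2) := by nlinarith [ha.1, hb.2]
  nlinarith [mul_pos (sub_pos.2 hab) hfactor]

lemma exists_cubic_eq {y : ℝ} (hy : y ∈ Ioo 0 2) : ∃ s ∈ Ioo (0 : ℝ) 1, s * (3 - s ^ 2) = y :=
  intermediate_value_Ioo zero_le_one
    (by fun_prop : Continuous fun s : ℝ => s * (3 - s ^ 2)).continuousOn (by norm_num [hy.1, hy.2])

theorem existsUnique_fixedPoint {α : ℝ} (hα : α ∈ Ioo 0 (1 / 2)) :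
    ∃! l : ℝ, l ∈ Ioo 0 1 ∧ l * deriv (Falpha α) l = Falpha α l := by
  have hc := (Falpha_denom_pos hα.1.le).ne'
  obtain ⟨s, hs, hcubic⟩ :=
    exists_cubic_eq (y := 2 * (1 - 2 * α)) ⟨by linarith [hα.2], by linarith [hα.1]⟩
  refine ⟨1 - s ^ 2, ⟨⟨by nlinarith [hs.1, hs.2], by nlinarith [hs.1]⟩,
    (fixedPoint_one_sub_sq_iff hc hs.1.le).2 hcubic⟩, ?_⟩
  rintro l ⟨hl, hfix⟩
  have hs' := sqrt_one_sub_mem_Ioo hl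
  rw [← one_sub_sq_sqrt_one_sub hl.2.le, strictMonoOn_cubic.injOn (Ioo_subset_Icc_self hs')
    (Ioo_subset_Icc_self hs) (((fixedPoint_iff_cubic hc hl.2.le).1 hfix).trans hcubic.symm)]

section CubicAsymptotics

variable {ι : Type*} {f : Filter ι} {s ε : ι → ℝ}

lemma tendsto_zero_of_cubic_eq (hs : ∀ᶠ i in f, s i ∈ Ioo 0 1 ∧ s i * (3 - s i ^ 2) = 4 * ε i)
    (hε : Tendsto ε f (𝓝 0)) : Tendsto s f (𝓝 0) := by
  refine tendsto_of_tendsto_of_tendsto_of_le_of_le' tendsto_const_nhds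
    (by simpa using hε.const_mul 2) ?_ ?_
  · filter_upwards [hs] with i hi using hi.1.1.le
  · filter_upwards [hs] with i ⟨⟨hpos, hlt⟩, heq⟩
    nlinarith

lemma tendsto_div_of_cubic_eq (hs : ∀ᶠ i in f, s i ∈ Ioo 0 1 ∧ s i * (3 - s i ^ 2) = 4 * ε i)
    (hε : Tendsto ε f (𝓝 0)) : Tendsto (fun i => ε i / s i) f (𝓝 (3 / 4)) := by
  have hlim : Tendsto (fun i => (3 - s i ^ 2) / 4) f (𝓝 (3 / 4)) := by
    simpa using (((tendsto_zero_of_cubic_eq hs hε).pow 2).const_sub 3).div_const 4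
  refine hlim.congr' ?_
  filter_upwards [hs] with i ⟨⟨hpos, _⟩, heq⟩
  field_simp
  linarith

end CubicAsymptotics

lemma tendsto_half_sub_nhdsLT : Tendsto (fun α : ℝ => 1 / 2 - α) (𝓝[<] (1 / 2)) (𝓝 0) := by
  have := (tendsto_const_nhds (x := (1 / 2 : ℝ))).sub (tendsto_id (x := 𝓝 (1 / 2 : ℝ)))
  rw [sub_self] at this
  exact this.mono_left nhdsWithin_le_nhds

section NearCritical

variable {lam : ℝ → ℝ}
  (hlam : ∀ᶠ α in 𝓝[<] (1 / 2 : ℝ),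
    lam α ∈ Ioo 0 1 ∧ lam α * deriv (Falpha α) (lam α) = Falpha α (lam α))
include hlam

lemma eventually_sqrt_one_sub_cubic_eq : ∀ᶠ α in 𝓝[<] (1 / 2 : ℝ), √(1 - lam α) ∈ Ioo 0 1 ∧
    √(1 - lam α) * (3 - √(1 - lam α) ^ 2) = 4 * (1 / 2 - α) := by
  filter_upwards [hlam, Ioo_mem_nhdsLT (by norm_num : (0 : ℝ) < 1 / 2)] with α ⟨hl, hfix⟩ hα
  refine ⟨sqrt_one_sub_mem_Ioo hl, ?_⟩
  linear_combination (fixedPoint_iff_cubic (Falpha_denom_pos hα.1.le).ne' hl.2.le).1 hfix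

lemma tendsto_sqrt_one_sub_zero : Tendsto (fun α => √(1 - lam α)) (𝓝[<] (1 / 2)) (𝓝 0) :=
  tendsto_zero_of_cubic_eq (eventually_sqrt_one_sub_cubic_eq hlam) tendsto_half_sub_nhdsLT

lemma tendsto_half_sub_div_sqrt_one_sub :
    Tendsto (fun α => (1 / 2 - α) / √(1 - lam α)) (𝓝[<] (1 / 2)) (𝓝 (3 / 4)) :=
  tendsto_div_of_cubic_eq (eventually_sqrt_one_sub_cubic_eq hlam) tendsto_half_sub_nhdsLT

lemma tendsto_one_sub_div_half_sub_sq :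
    Tendsto (fun α => (1 - lam α) / (1 / 2 - α) ^ 2) (𝓝[<] (1 / 2)) (𝓝 (16 / 9)) := by
  have hlim : Tendsto (fun α => ((1 / 2 - α) / √(1 - lam α))⁻¹ ^ 2) (𝓝[<] (1 / 2))
      (𝓝 (16 / 9)) := by
    convert ((tendsto_half_sub_div_sqrt_one_sub hlam).inv₀ (by norm_num)).pow 2 using 2
    norm_num
  refine hlim.congr' ?_
  filter_upwards [hlam] with α ⟨hl, _⟩
  rw [inv_div, div_pow, Real.sq_sqrt (by linarith [hl.2])]

lemma tendsto_Falpha_fixedPoint :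
    Tendsto (fun α => Falpha α (lam α)) (𝓝[<] (1 / 2)) (𝓝 1) := by
  have hlam1 : Tendsto lam (𝓝[<] (1 / 2)) (𝓝 1) := by
    have := ((tendsto_sqrt_one_sub_zero hlam).pow 2).const_sub 1
    rw [zero_pow two_ne_zero, sub_zero] at this
    refine this.congr' ?_
    filter_upwards [hlam] with α ⟨hl, _⟩ using one_sub_sq_sqrt_one_sub hl.2.le
  have := (continuousAt_Falpha (Falpha_denom_pos (by norm_num : (0 : ℝ) ≤ 1 / 2)).ne'
    1).tendsto.comp ((tendsto_id.mono_left nhdsWithin_le_nhds).prodMk_nhds hlam1)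
  rwa [Falpha_half_one] at this

lemma tendsto_half_sub_mul_deriv_deriv_Falpha :
    Tendsto (fun α => (1 / 2 - α) * deriv (deriv (Falpha α)) (lam α)) (𝓝[<] (1 / 2))
      (𝓝 (3 * √3 / 16)) := by
  have hid : Tendsto (fun α : ℝ => α) (𝓝[<] (1 / 2)) (𝓝 (1 / 2)) :=
    tendsto_id.mono_left nhdsWithin_le_nhds
  have hden : Tendsto (fun α : ℝ => 3 / (4 * (2 * α - 1 + √3))) (𝓝[<] (1 / 2))
      (𝓝 (3 / (4 * (2 * (1 / 2) - 1 + √3)))) :=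
    tendsto_const_nhds.div ((((hid.const_mul 2).sub_const 1).add_const √3).const_mul 4)
      (by positivity)
  have hval : 3 / 4 * (3 / (4 * (2 * (1 / 2) - 1 + √3))) = 3 * √3 / 16 := by
    have h3 : √3 ^ 2 = 3 := Real.sq_sqrt (by norm_num)
    norm_num
    field_simp
    linear_combination (-16 : ℝ) * h3
  rw [← hval]
  refine ((tendsto_half_sub_div_sqrt_one_sub hlam).mul hden).congr' ?_
  filter_upwards [hlam] with α ⟨hl, _⟩
  rw [deriv_deriv_Falpha α hl.2]
  simp only [div_eq_mul_inv, mul_inv]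
  ring

end NearCritical

/-- For every `α ∈ (0, 1/2)` there is a unique `λ_α ∈ (0,1)` with
`λ_α F_α'(λ_α) = F_α(λ_α)`, and as `α ↑ 1/2`:
`(1 - λ_α)/(1/2 - α)² → 16/9`, `F_α(λ_α) → 1`, and
`(1/2 - α) F_α''(λ_α) → 3√3/16`. -/
theorem lambda_alpha_near_critical :
    (∀ α ∈ Set.Ioo (0 : ℝ) (1 / 2),
      ∃! l : ℝ, l ∈ Set.Ioo (0 : ℝ) 1 ∧ l * deriv (Falpha α) l = Falpha α l)
    ∧ ∀ lam : ℝ → ℝ,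
        (∀ α ∈ Set.Ioo (0 : ℝ) (1 / 2),
          lam α ∈ Set.Ioo (0 : ℝ) 1
            ∧ lam α * deriv (Falpha α) (lam α) = Falpha α (lam α)) →
        (Filter.Tendsto (fun α => (1 - lam α) / (1 / 2 - α) ^ 2)
            (nhdsWithin (1 / 2) (Set.Iio (1 / 2))) (nhds (16 / 9))
          ∧ Filter.Tendsto (fun α => Falpha α (lam α))
              (nhdsWithin (1 / 2) (Set.Iio (1 / 2))) (nhds 1)
          ∧ Filter.Tendsto (fun α => (1 / 2 - α) * deriv (deriv (Falpha α)) (lam α))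
              (nhdsWithin (1 / 2) (Set.Iio (1 / 2)))
              (nhds (3 * Real.sqrt 3 / 16))) := by
  refine ⟨fun α hα => existsUnique_fixedPoint hα, fun lam hlam => ?_⟩
  have hlam' : ∀ᶠ α in 𝓝[<] (1 / 2 : ℝ),
      lam α ∈ Ioo 0 1 ∧ lam α * deriv (Falpha α) (lam α) = Falpha α (lam α) := by
    filter_upwards [Ioo_mem_nhdsLT (by norm_num : (0 : ℝ) < 1 / 2)] using hlam
  exact ⟨tendsto_one_sub_div_half_sub_sq hlam', tendsto_Falpha_fixedPoint hlam',
    tendsto_half_sub_mul_deriv_deriv_Falpha hlam'⟩
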